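/- arXiv:1711.09292 — 6 statements merged into one kernel-verified Lean document; each statement's English description precedes it below -/
import Mathlib

section
/- Let G = diag(g1, g2, g3) with g1, g2, g3 > 0, and R, R_d ∈ SO(3). Then A(R, R_d) = (1/2) tr(G (I − R_dᵀ R)) is nonnegative, and A(R, R_d) = 0 if and only if R = R_d. -/
open Matrix Real

noncomputable section

/-- The hat map sending `x ∈ ℝ³` to the skew-symmetric matrix `x̂` with `x̂ y = x × y`. -/
def hat (x : Fin 3 → ℝ) : Matrix (Fin 3) (Fin 3) ℝ :=
  !![0, -x 2, x 1; x 2, 0, -x 0; -x 1, x 0, 0]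

/-- The vee map, inverse of the hat map on skew-symmetric matrices. -/
def vee (A : Matrix (Fin 3) (Fin 3) ℝ) : Fin 3 → ℝ :=
  ![A 2 1, A 0 2, A 1 0]

/-- `R ∈ SO(3)`: orthogonal with determinant one. -/
def SO3 (R : Matrix (Fin 3) (Fin 3) ℝ) : Prop := Rᵀ * R = 1 ∧ R.det = 1

/-- Attractive configuration error `A(R,R_d) = ½ tr(G(I − R_dᵀR))`. -/
def errA (G Rd R : Matrix (Fin 3) (Fin 3) ℝ) : ℝ := (1 / 2) * (G * (1 - Rdᵀ * R)).trace

/-- Repulsive (barrier) error `B(R) = 1 − (1/α) ln((cos θ − rᵀRᵀv)/(1 + cos θ))`. -/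
def errB (r v : Fin 3 → ℝ) (θ α : ℝ) (R : Matrix (Fin 3) (Fin 3) ℝ) : ℝ :=
  1 - (1 / α) * Real.log ((Real.cos θ - r ⬝ᵥ (Rᵀ *ᵥ v)) / (1 + Real.cos θ))

/-- Attractive attitude error vector `e_{R_A} = ½ (G R_dᵀ R − Rᵀ R_d G)^∨`. -/
def eRA (G Rd R : Matrix (Fin 3) (Fin 3) ℝ) : Fin 3 → ℝ :=
  vee ((1 / 2 : ℝ) • (G * Rdᵀ * R - Rᵀ * Rd * G))

/-- Repulsive attitude error vector `e_{R_B} = ((Rᵀv)^∧ r)/(α(rᵀRᵀv − cos θ))`. -/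
def eRB (r v : Fin 3 → ℝ) (θ α : ℝ) (R : Matrix (Fin 3) (Fin 3) ℝ) : Fin 3 → ℝ :=
  (α * (r ⬝ᵥ (Rᵀ *ᵥ v) - Real.cos θ))⁻¹ • ((hat (Rᵀ *ᵥ v)) *ᵥ r)

/-- Combined attitude error vector `e_R = e_{R_A} B + A e_{R_B}`. -/
def eRvec (G Rd : Matrix (Fin 3) (Fin 3) ℝ) (r v : Fin 3 → ℝ) (θ α : ℝ)
    (R : Matrix (Fin 3) (Fin 3) ℝ) : Fin 3 → ℝ :=
  errB r v θ α R • eRA G Rd R + errA G Rd R • eRB r v θ α R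

/-- Configuration error function `Ψ = A · B`. -/
def Psi (G Rd : Matrix (Fin 3) (Fin 3) ℝ) (r v : Fin 3 → ℝ) (θ α : ℝ)
    (R : Matrix (Fin 3) (Fin 3) ℝ) : ℝ := errA G Rd R * errB r v θ α R

/-- `E(R,R_d) = ½ (tr(RᵀR_dG) I − RᵀR_dG)`. -/
def Emat (G Rd R : Matrix (Fin 3) (Fin 3) ℝ) : Matrix (Fin 3) (Fin 3) ℝ :=
  (1 / 2 : ℝ) • ((Rᵀ * Rd * G).trace • (1 : Matrix (Fin 3) (Fin 3) ℝ) - Rᵀ * Rd * G)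


private lemma aux_sq_le (q : ℝ) (h : q ^ 2 ≤ 1) : q ≤ 1 := by nlinarith

private lemma aux_zero (a b c : ℝ) (h : a ^ 2 + b ^ 2 + c ^ 2 = 1) (ha : a = 1) :
    b = 0 ∧ c = 0 := by
  constructor <;> [skip; skip] <;>
    (apply sq_eq_zero_iff.mp; nlinarith [sq_nonneg b, sq_nonneg c])

private lemma aux_diag (g₁ g₂ g₃ q₁ q₂ q₃ : ℝ) (hg₁ : 0 < g₁) (hg₂ : 0 < g₂) (hg₃ : 0 < g₃)
    (h1 : q₁ ≤ 1) (h2 : q₂ ≤ 1) (h3 : q₃ ≤ 1)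
    (hz : (1 / 2) * (g₁ * (1 - q₁) + g₂ * (1 - q₂) + g₃ * (1 - q₃)) = 0) :
    q₁ = 1 ∧ q₂ = 1 ∧ q₃ = 1 := by
  refine ⟨?_, ?_, ?_⟩ <;> nlinarith

/-- `A(R,R_d) = ½ tr(G(I − R_dᵀR))` is nonnegative and vanishes iff `R = R_d`. -/
theorem stmt_8 (g₁ g₂ g₃ : ℝ) (hg₁ : 0 < g₁) (hg₂ : 0 < g₂) (hg₃ : 0 < g₃)
    (R Rd : Matrix (Fin 3) (Fin 3) ℝ) (hR : SO3 R) (hRd : SO3 Rd) :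
    0 ≤ errA (Matrix.diagonal ![g₁, g₂, g₃]) Rd R ∧
    (errA (Matrix.diagonal ![g₁, g₂, g₃]) Rd R = 0 ↔ R = Rd) := by
  obtain ⟨hR1, _⟩ := hR
  obtain ⟨hRd1, _⟩ := hRd
  have hRdinv : Rd * Rdᵀ = 1 := mul_eq_one_comm.mp hRd1
  set Q := Rdᵀ * R with hQ
  have hQorth : Qᵀ * Q = 1 := by
    rw [hQ, Matrix.transpose_mul, Matrix.transpose_transpose, mul_assoc,
      ← mul_assoc Rd, hRdinv, one_mul, hR1]
  clear_value Q
  have hcolS : ∀ j, ∑ i, Q i j ^ 2 = 1 := by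
    intro j
    have := congrFun (congrFun hQorth j) j
    simpa [Matrix.mul_apply, Matrix.transpose_apply, Matrix.one_apply, sq] using this
  have hcol : ∀ j, Q 0 j ^ 2 + Q 1 j ^ 2 + Q 2 j ^ 2 = 1 := by
    intro j
    have := hcolS j
    rwa [Fin.sum_univ_three] at this
  have hsqle : ∀ j, Q j j ^ 2 ≤ 1 := fun j => (hcolS j) ▸
    Finset.single_le_sum (fun i _ => sq_nonneg (Q i j)) (Finset.mem_univ j)
  have hdiag : ∀ j, Q j j ≤ 1 := fun j => aux_sq_le _ (hsqle j)
  have htr : errA (Matrix.diagonal ![g₁, g₂, g₃]) Rd R =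
      (1 / 2) * (g₁ * (1 - Q 0 0) + g₂ * (1 - Q 1 1) + g₃ * (1 - Q 2 2)) := by
    simp [errA, ← hQ, Matrix.trace, Matrix.diag, Matrix.mul_apply,
      Matrix.diagonal, Matrix.one_apply, Fin.sum_univ_three]
  have h0 := hdiag 0
  have h1 := hdiag 1
  have h2 := hdiag 2
  constructor
  · rw [htr]; nlinarith
  constructor
  · intro hz
    rw [htr] at hz
    obtain ⟨e0, e1, e2⟩ := aux_diag _ _ _ _ _ _ hg₁ hg₂ hg₃ h0 h1 h2 hz
    obtain ⟨z10, z20⟩ := aux_zero _ _ _ (hcol 0) e0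
    have hc1 := hcol 1
    have hc2 := hcol 2
    obtain ⟨z21, z01⟩ := aux_zero _ _ _ (by linarith [hc1] : Q 1 1 ^ 2 + Q 2 1 ^ 2 + Q 0 1 ^ 2 = 1) e1
    obtain ⟨z02, z12⟩ := aux_zero _ _ _ (by linarith [hc2] : Q 2 2 ^ 2 + Q 0 2 ^ 2 + Q 1 2 ^ 2 = 1) e2
    have hQ1 : Q = 1 := by
      ext i j
      fin_cases i <;> fin_cases j <;>
        simp only [Matrix.one_apply, Fin.mk_zero, Fin.mk_one, Fin.isValue] <;>
        first
          | exact e0 | exact e1 | exact e2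
          | simpa using z10 | simpa using z20 | simpa using z01
          | simpa using z21 | simpa using z02 | simpa using z12
    have heq : Rd * Q = Rd * 1 := by rw [hQ1]
    rw [hQ, ← mul_assoc, hRdinv, one_mul, mul_one] at heq
    exact heq
  · intro h
    rw [htr]
    have hq1 : Q = 1 := by rw [hQ, h, hRd1]
    rw [hq1]
    simp [Matrix.one_apply]
end
end

section
/- Let r, v be unit vectors, θ ∈ [0, π/2], α > 0, G = diag(g1,g2,g3) with gi > 0 distinct, and R_d ∈ SO(3) satisfying rᵀ R_dᵀ v < cos θ. Then the configuration error function Ψ(R, R_d) = A(R, R_d) B(R), with A(R, R_d) = (1/2) tr(G(I − R_dᵀ R)) and B(R) = 1 − (1/α) ln((cos θ − rᵀ Rᵀ v)/(1 + cos θ)), is positive definite about R = R_d on the feasible set {R ∈ SO(3) : rᵀ Rᵀ v < cos θ}: Ψ ≥ 0 with equality iff R = R_d. -/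
open Matrix Real

noncomputable section

lemma aux_dot_ge_neg_one (r w : Fin 3 → ℝ) (hr : r ⬝ᵥ r = 1) (hw : w ⬝ᵥ w = 1) :
    -1 ≤ r ⬝ᵥ w := by
  have hr' : r 0 ^ 2 + r 1 ^ 2 + r 2 ^ 2 = 1 := by
    have := hr; simp [dotProduct, Fin.sum_univ_three] at this; nlinarith [this]
  have hw' : w 0 ^ 2 + w 1 ^ 2 + w 2 ^ 2 = 1 := by
    have := hw; simp [dotProduct, Fin.sum_univ_three] at this; nlinarith [this]
  have expand : r ⬝ᵥ w = r 0 * w 0 + r 1 * w 1 + r 2 * w 2 := by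
    simp [dotProduct, Fin.sum_univ_three]
  rw [expand]
  nlinarith [sq_nonneg (r 0 * w 1 - r 1 * w 0), sq_nonneg (r 0 * w 2 - r 2 * w 0),
    sq_nonneg (r 1 * w 2 - r 2 * w 1), sq_nonneg (r 0 * w 0 + r 1 * w 1 + r 2 * w 2 + 1), hr', hw']

lemma aux_sq_zero {a b : ℝ} (h : a ^ 2 + b ^ 2 = 0) : a = 0 ∧ b = 0 := by
  have ha : a ^ 2 = 0 := le_antisymm (by nlinarith [sq_nonneg b]) (sq_nonneg a)
  have hb : b ^ 2 = 0 := le_antisymm (by nlinarith [sq_nonneg a]) (sq_nonneg b)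
  exact ⟨pow_eq_zero_iff two_ne_zero |>.mp ha, pow_eq_zero_iff two_ne_zero |>.mp hb⟩

/-- `Ψ = A·B` is positive definite about `R = R_d` on the feasible set. -/
theorem stmt_9 (g₁ g₂ g₃ : ℝ) (hg₁ : 0 < g₁) (hg₂ : 0 < g₂) (hg₃ : 0 < g₃)
    (hd₁ : g₁ ≠ g₂) (hd₂ : g₂ ≠ g₃) (hd₃ : g₃ ≠ g₁)
    (r v : Fin 3 → ℝ) (hr : r ⬝ᵥ r = 1) (hv : v ⬝ᵥ v = 1)
    (θ α : ℝ) (hθ₀ : 0 ≤ θ) (hθ₁ : θ ≤ π / 2) (hα : 0 < α)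
    (R Rd : Matrix (Fin 3) (Fin 3) ℝ) (hR : SO3 R) (hRd : SO3 Rd)
    (hfeasd : r ⬝ᵥ (Rdᵀ *ᵥ v) < Real.cos θ)
    (hfeas : r ⬝ᵥ (Rᵀ *ᵥ v) < Real.cos θ) :
    0 ≤ Psi (Matrix.diagonal ![g₁, g₂, g₃]) Rd r v θ α R ∧
    (Psi (Matrix.diagonal ![g₁, g₂, g₃]) Rd r v θ α R = 0 ↔ R = Rd) := by
  obtain ⟨hRo, -⟩ := hR
  obtain ⟨hRdo, -⟩ := hRd
  have hRo' : R * Rᵀ = 1 := mul_eq_one_comm.mp hRo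
  have hRdo' : Rd * Rdᵀ = 1 := mul_eq_one_comm.mp hRdo
  set Q := Rdᵀ * R with hQ
  clear_value Q
  have hQo : Qᵀ * Q = 1 := by
    rw [hQ, Matrix.transpose_mul, Matrix.transpose_transpose]
    rw [mul_assoc, ← mul_assoc Rd Rdᵀ R, hRdo', one_mul, hRo]
  -- column norms
  have col : ∀ i : Fin 3, Q 0 i ^ 2 + Q 1 i ^ 2 + Q 2 i ^ 2 = 1 := by
    intro i
    have := congrFun (congrFun hQo i) i
    simp [Matrix.mul_apply, Fin.sum_univ_three, Matrix.one_apply] at this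
    nlinarith [this]
  have hdiag0 : Q 0 0 ≤ 1 := by
    nlinarith [col 0, sq_nonneg (Q 0 0 - 1), sq_nonneg (Q 1 0), sq_nonneg (Q 2 0)]
  have hdiag1 : Q 1 1 ≤ 1 := by
    nlinarith [col 1, sq_nonneg (Q 1 1 - 1), sq_nonneg (Q 0 1), sq_nonneg (Q 2 1)]
  have hdiag2 : Q 2 2 ≤ 1 := by
    nlinarith [col 2, sq_nonneg (Q 2 2 - 1), sq_nonneg (Q 0 2), sq_nonneg (Q 1 2)]
  have htr : (Matrix.diagonal ![g₁, g₂, g₃] * (1 - Q)).trace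
      = g₁ * (1 - Q 0 0) + g₂ * (1 - Q 1 1) + g₃ * (1 - Q 2 2) := by
    simp [Matrix.trace, Matrix.diag, Matrix.mul_apply, Fin.sum_univ_three, Matrix.one_apply,
      Matrix.diagonal]
  have hA : errA (Matrix.diagonal ![g₁, g₂, g₃]) Rd R
      = (1/2) * (g₁ * (1 - Q 0 0) + g₂ * (1 - Q 1 1) + g₃ * (1 - Q 2 2)) := by
    rw [errA, ← hQ, htr]
  have hA0 : 0 ≤ errA (Matrix.diagonal ![g₁, g₂, g₃]) Rd R := by
    rw [hA]
    have p0 : 0 ≤ g₁ * (1 - Q 0 0) := mul_nonneg hg₁.le (by linarith [hdiag0])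
    have p1 : 0 ≤ g₂ * (1 - Q 1 1) := mul_nonneg hg₂.le (by linarith [hdiag1])
    have p2 : 0 ≤ g₃ * (1 - Q 2 2) := mul_nonneg hg₃.le (by linarith [hdiag2])
    linarith
  -- B positivity
  have hw : (Rᵀ *ᵥ v) ⬝ᵥ (Rᵀ *ᵥ v) = 1 := by
    rw [Matrix.dotProduct_mulVec, Matrix.mulVec_transpose, Matrix.vecMul_vecMul, hRo',
      Matrix.vecMul_one, hv]
  set t := r ⬝ᵥ (Rᵀ *ᵥ v) with ht
  have htlb : -1 ≤ t := aux_dot_ge_neg_one r (Rᵀ *ᵥ v) hr hw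
  have hcosnn : 0 ≤ Real.cos θ := Real.cos_nonneg_of_mem_Icc ⟨by linarith [Real.pi_pos], hθ₁⟩
  have hden : 0 < 1 + Real.cos θ := by linarith
  have hnum : 0 < Real.cos θ - t := by linarith [hfeas]
  have hratio : (Real.cos θ - t) / (1 + Real.cos θ) ≤ 1 := by
    rw [div_le_one hden]; linarith
  have hlog : Real.log ((Real.cos θ - t) / (1 + Real.cos θ)) ≤ 0 :=
    Real.log_nonpos (le_of_lt (div_pos hnum hden)) hratio
  have hB : 1 ≤ errB r v θ α R := by
    rw [errB, ← ht]
    have : (1 / α) * Real.log ((Real.cos θ - t) / (1 + Real.cos θ)) ≤ 0 :=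
      mul_nonpos_of_nonneg_of_nonpos (by positivity) hlog
    linarith
  have hBpos : 0 < errB r v θ α R := by linarith
  constructor
  · exact mul_nonneg hA0 (le_of_lt hBpos)
  constructor
  · intro h
    have hAzero : errA (Matrix.diagonal ![g₁, g₂, g₃]) Rd R = 0 := by
      rcases mul_eq_zero.mp h with h' | h'
      · exact h'
      · exact absurd h' (ne_of_gt hBpos)
    rw [hA] at hAzero
    have p0 : 0 ≤ g₁ * (1 - Q 0 0) := mul_nonneg hg₁.le (by linarith [hdiag0])
    have p1 : 0 ≤ g₂ * (1 - Q 1 1) := mul_nonneg hg₂.le (by linarith [hdiag1])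
    have p2 : 0 ≤ g₃ * (1 - Q 2 2) := mul_nonneg hg₃.le (by linarith [hdiag2])
    have q0 : g₁ * (1 - Q 0 0) = 0 := by linarith
    have q1 : g₂ * (1 - Q 1 1) = 0 := by linarith
    have q2 : g₃ * (1 - Q 2 2) = 0 := by linarith
    have e0 : Q 0 0 = 1 := by
      rcases mul_eq_zero.mp q0 with h' | h'
      · exact absurd h' (ne_of_gt hg₁)
      · linarith
    have e1 : Q 1 1 = 1 := by
      rcases mul_eq_zero.mp q1 with h' | h'
      · exact absurd h' (ne_of_gt hg₂)
      · linarith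
    have e2 : Q 2 2 = 1 := by
      rcases mul_eq_zero.mp q2 with h' | h'
      · exact absurd h' (ne_of_gt hg₃)
      · linarith
    have c0' : Q 1 0 ^ 2 + Q 2 0 ^ 2 = 0 := by
      have h' := col 0; rw [e0] at h'; linear_combination h'
    have c1' : Q 0 1 ^ 2 + Q 2 1 ^ 2 = 0 := by
      have h' := col 1; rw [e1] at h'; linear_combination h'
    have c2' : Q 0 2 ^ 2 + Q 1 2 ^ 2 = 0 := by
      have h' := col 2; rw [e2] at h'; linear_combination h'
    obtain ⟨z10, z20⟩ := aux_sq_zero c0'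
    obtain ⟨z01, z21⟩ := aux_sq_zero c1'
    obtain ⟨z02, z12⟩ := aux_sq_zero c2'
    have hQ1 : Q = 1 := by
      rw [Matrix.eta_fin_three Q, e0, e1, e2, z10, z20, z01, z21, z02, z12]
      exact (Matrix.one_fin_three).symm
    have : Rd * Q = Rd * 1 := by rw [hQ1]
    rw [hQ, ← mul_assoc, hRdo', one_mul, mul_one] at this
    exact this
  · intro h
    subst h
    have : Q = 1 := by rw [hQ, hRdo]
    rw [Psi, hA, this]
    simp
end
end

section
/- Let R : R → SO(3) satisfy the kinematic equation Ṙ = R Ω̂ with Ω : R → R^3, let r, v be unit vectors, θ ∈ [0, π/2], α > 0, and suppose rᵀ R(t)ᵀ v < cos θ. Then d/dt B(R(t)) = e_{R_B} · Ω, where B(R) = 1 − (1/α) ln((cos θ − rᵀ Rᵀ v)/(1 + cos θ)) and e_{R_B} = ((Rᵀ v)^∧ r)/(α (rᵀ Rᵀ v − cos θ)). -/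
open Matrix Real

attribute [local instance] Matrix.normedAddCommGroup Matrix.normedSpace

noncomputable section

set_option maxHeartbeats 1000000 in
/-- Along `Ṙ = RΩ̂`, one has `d/dt B(R(t)) = e_{R_B} · Ω`. -/
theorem stmt_12 (r v : Fin 3 → ℝ) (hr : r ⬝ᵥ r = 1) (hv : v ⬝ᵥ v = 1)
    (θ α : ℝ) (hθ₀ : 0 ≤ θ) (hθ₁ : θ ≤ π / 2) (hα : 0 < α)
    (R : ℝ → Matrix (Fin 3) (Fin 3) ℝ) (Ω : ℝ → Fin 3 → ℝ)
    (hSO : ∀ s, SO3 (R s)) (t : ℝ)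
    (hdyn : HasDerivAt R (R t * hat (Ω t)) t)
    (hfeas : r ⬝ᵥ ((R t)ᵀ *ᵥ v) < Real.cos θ) :
    HasDerivAt (fun s => errB r v θ α (R s)) (eRB r v θ α (R t) ⬝ᵥ Ω t) t := by
  classical
  -- linear functional M ↦ r ⬝ᵥ (Mᵀ *ᵥ v)
  set L : Matrix (Fin 3) (Fin 3) ℝ →ₗ[ℝ] ℝ :=
    { toFun := fun M => r ⬝ᵥ (Mᵀ *ᵥ v)
      map_add' := by
        intro M N
        simp [Matrix.transpose_add, Matrix.add_mulVec, dotProduct_add]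
      map_smul' := by
        intro c M
        simp [Matrix.transpose_smul, Matrix.smul_mulVec, dotProduct_smul] } with hL
  have hf : HasDerivAt (fun s => r ⬝ᵥ ((R s)ᵀ *ᵥ v))
      (r ⬝ᵥ ((R t * hat (Ω t))ᵀ *ᵥ v)) t := by
    have := (L.toContinuousLinearMap.hasFDerivAt (x := R t)).comp_hasDerivAt t hdyn
    exact this
  set c := Real.cos θ with hc
  have hcpos : 0 < c - r ⬝ᵥ ((R t)ᵀ *ᵥ v) := sub_pos.mpr hfeas
  have h1c : 0 < 1 + c := by
    have h0 : 0 ≤ Real.cos θ :=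
      Real.cos_nonneg_of_neg_pi_div_two_le_of_le (by linarith [Real.pi_pos]) hθ₁
    rw [hc]; linarith
  -- derivative of the inner quotient
  have hq : HasDerivAt (fun s => (c - r ⬝ᵥ ((R s)ᵀ *ᵥ v)) / (1 + c))
      ((-(r ⬝ᵥ ((R t * hat (Ω t))ᵀ *ᵥ v))) / (1 + c)) t := by
    simpa using ((hasDerivAt_const t c).sub hf).div_const (1 + c)
  have hqne : (c - r ⬝ᵥ ((R t)ᵀ *ᵥ v)) / (1 + c) ≠ 0 :=
    ne_of_gt (div_pos hcpos h1c)
  have hlog := hq.log hqne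
  have hB : HasDerivAt (fun s => errB r v θ α (R s))
      (0 - (1 / α) * ((-(r ⬝ᵥ ((R t * hat (Ω t))ᵀ *ᵥ v))) / (1 + c) /
        ((c - r ⬝ᵥ ((R t)ᵀ *ᵥ v)) / (1 + c)))) t := by
    exact (hasDerivAt_const t (1 : ℝ)).sub ((hlog.const_mul (1 / α)))
  have hcross : (hat ((R t)ᵀ *ᵥ v) *ᵥ r) ⬝ᵥ Ω t
      = -(r ⬝ᵥ ((R t * hat (Ω t))ᵀ *ᵥ v)) := by
    simp [hat, Matrix.mulVec, Matrix.mul_apply, Matrix.transpose_apply, dotProduct,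
      Fin.sum_univ_three]
    ring
  have hqq : ∀ x y z : ℝ, z ≠ 0 → x / z / (y / z) = x / y := by
    intro x y z hz; field_simp
  have hαne : α ≠ 0 := ne_of_gt hα
  have hne : c - r ⬝ᵥ ((R t)ᵀ *ᵥ v) ≠ 0 := ne_of_gt hcpos
  have hL2 : eRB r v θ α (R t) ⬝ᵥ Ω t
      = (α * (r ⬝ᵥ ((R t)ᵀ *ᵥ v) - c))⁻¹ * ((hat ((R t)ᵀ *ᵥ v) *ᵥ r) ⬝ᵥ Ω t) := by
    rw [eRB, ← hc, smul_dotProduct, smul_eq_mul]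
  convert hB using 1
  rw [hqq _ _ _ (ne_of_gt h1c), hL2, hcross]
  generalize r ⬝ᵥ ((R t * hat (Ω t))ᵀ *ᵥ v) = X
  generalize hF : r ⬝ᵥ ((R t)ᵀ *ᵥ v) = F
  rw [hF] at hne
  have h2 : F - c ≠ 0 := fun h => hne (by linarith [sub_eq_zero.mp h])
  field_simp [hαne, h2]
  ring
end
end

section
/- Let G = diag(g1,g2,g3) with positive entries and R, R_d ∈ SO(3). Then the matrix E(R,R_d) = (1/2)(tr(Rᵀ R_d G) I − Rᵀ R_d G) satisfies ‖E‖_F ≤ (1/√2) tr(G), where ‖·‖_F is the Frobenius norm. -/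
open Matrix Real

noncomputable section

set_option maxHeartbeats 2000000 in
lemma aux (g₁ g₂ g₃ : ℝ) (hg₁ : 0 < g₁) (hg₂ : 0 < g₂) (hg₃ : 0 < g₃)
    (Q : Matrix (Fin 3) (Fin 3) ℝ) (hQ : Qᵀ * Q = 1) :
    (((1 / 2 : ℝ) • ((Q * Matrix.diagonal ![g₁, g₂, g₃]).trace • (1 : Matrix (Fin 3) (Fin 3) ℝ)
        - Q * Matrix.diagonal ![g₁, g₂, g₃]))ᵀ *
      ((1 / 2 : ℝ) • ((Q * Matrix.diagonal ![g₁, g₂, g₃]).trace • (1 : Matrix (Fin 3) (Fin 3) ℝ)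
        - Q * Matrix.diagonal ![g₁, g₂, g₃]))).trace
      ≤ (g₁ + g₂ + g₃)^2 / 2 := by
  have h00 := congrFun (congrFun hQ 0) 0
  have h11 := congrFun (congrFun hQ 1) 1
  have h22 := congrFun (congrFun hQ 2) 2
  simp [Matrix.mul_apply, Fin.sum_univ_three, Matrix.one_apply] at h00 h11 h22
  simp only [Matrix.trace, Matrix.diag, Matrix.mul_apply, Fin.sum_univ_three,
    Matrix.diagonal, Matrix.smul_apply, Matrix.sub_apply, Matrix.one_apply,
    Matrix.transpose_apply, Matrix.of_apply, Matrix.cons_val', Matrix.cons_val_zero,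
    Matrix.cons_val_one, Matrix.head_cons, Matrix.empty_val', Matrix.cons_val_fin_one,
    Matrix.cons_val_two, Matrix.tail_cons, smul_eq_mul, Finset.sum_apply, Fin.reduceEq,
    reduceIte, Fin.isValue, one_ne_zero, if_true, if_false]
  norm_num
  nlinarith [h00, h11, h22, sq_nonneg (Q 0 0 - Q 1 1), sq_nonneg (Q 0 0 - Q 2 2),
    sq_nonneg (Q 1 1 - Q 2 2), mul_pos hg₁ hg₂, mul_pos hg₁ hg₃, mul_pos hg₂ hg₃,
    mul_nonneg (mul_nonneg hg₁.le hg₂.le) (sq_nonneg (Q 0 0 - Q 1 1)),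
    mul_nonneg (mul_nonneg hg₁.le hg₃.le) (sq_nonneg (Q 0 0 - Q 2 2)),
    mul_nonneg (mul_nonneg hg₂.le hg₃.le) (sq_nonneg (Q 1 1 - Q 2 2)),
    mul_nonneg (mul_nonneg hg₁.le hg₂.le) (sq_nonneg (Q 1 0)),
    mul_nonneg (mul_nonneg hg₁.le hg₂.le) (sq_nonneg (Q 0 1)),
    sq_nonneg (g₁ - g₂), sq_nonneg (g₁ - g₃), sq_nonneg (g₂ - g₃),
    mul_pos (mul_pos hg₁ hg₂) hg₃]

/-- `‖E(R,R_d)‖_F ≤ (1/√2) tr G`. -/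
theorem stmt_15 (g₁ g₂ g₃ : ℝ) (hg₁ : 0 < g₁) (hg₂ : 0 < g₂) (hg₃ : 0 < g₃)
    (R Rd : Matrix (Fin 3) (Fin 3) ℝ) (hR : SO3 R) (hRd : SO3 Rd) :
    Real.sqrt (((Emat (Matrix.diagonal ![g₁, g₂, g₃]) Rd R)ᵀ *
        Emat (Matrix.diagonal ![g₁, g₂, g₃]) Rd R).trace)
      ≤ (1 / Real.sqrt 2) * (Matrix.diagonal ![g₁, g₂, g₃]).trace := by
  have hQ : (Rᵀ * Rd)ᵀ * (Rᵀ * Rd) = 1 := by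
    have hR' : R * Rᵀ = 1 := mul_eq_one_comm.mp hR.1
    calc (Rᵀ * Rd)ᵀ * (Rᵀ * Rd) = Rdᵀ * (R * Rᵀ) * Rd := by
          simp [Matrix.transpose_mul, Matrix.mul_assoc]
    _ = 1 := by rw [hR']; simp [hRd.1]
  have key := aux g₁ g₂ g₃ hg₁ hg₂ hg₃ (Rᵀ * Rd) hQ
  have htr : (Matrix.diagonal ![g₁, g₂, g₃]).trace = g₁ + g₂ + g₃ := by
    simp [Matrix.trace, Fin.sum_univ_three]
  rw [htr]
  have hs : (0:ℝ) ≤ g₁ + g₂ + g₃ := by linarith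
  have hE : Emat (Matrix.diagonal ![g₁, g₂, g₃]) Rd R =
      (1 / 2 : ℝ) • (((Rᵀ * Rd) * Matrix.diagonal ![g₁, g₂, g₃]).trace •
        (1 : Matrix (Fin 3) (Fin 3) ℝ) - (Rᵀ * Rd) * Matrix.diagonal ![g₁, g₂, g₃]) := rfl
  rw [hE]
  calc Real.sqrt _ ≤ Real.sqrt ((g₁ + g₂ + g₃)^2 / 2) := Real.sqrt_le_sqrt key
  _ = 1 / Real.sqrt 2 * (g₁ + g₂ + g₃) := by
      rw [Real.sqrt_div (sq_nonneg _), Real.sqrt_sq hs]; ring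
end
end

section
/- Let J be a symmetric positive definite 3×3 inertia matrix, and suppose (R(t), Ω(t)) evolve by J Ω̇ + Ω × J Ω = u and Ṙ = R Ω̂, with control u = −k_R e_R − k_Ω Ω + Ω × J Ω for positive gains k_R, k_Ω, where e_R = e_{R_A} B(R) + A(R,R_d) e_{R_B} is the gradient vector of the configuration error function Ψ = A·B (so that d/dt Ψ = e_R · Ω). Then the Lyapunov function V = (1/2) Ωᵀ J Ω + k_R Ψ(R, R_d) satisfies V̇ = −k_Ω ‖Ω‖², and in particular V is nonincreasing along trajectories. -/
attribute [local instance] Matrix.normedAddCommGroup Matrix.normedSpace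

open Matrix Real

noncomputable section

/-- With `u = −k_R e_R − k_Ω Ω + Ω × JΩ` and no disturbance, the Lyapunov function
`V = ½ ΩᵀJΩ + k_R Ψ` satisfies `V̇ = −k_Ω ‖Ω‖²`, hence `V` is nonincreasing. -/
theorem stmt_17 (J : Matrix (Fin 3) (Fin 3) ℝ) (hJ : J.PosDef)
    (g₁ g₂ g₃ : ℝ) (hg₁ : 0 < g₁) (hg₂ : 0 < g₂) (hg₃ : 0 < g₃)
    (r v : Fin 3 → ℝ) (hr : r ⬝ᵥ r = 1) (hv : v ⬝ᵥ v = 1)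
    (θ α : ℝ) (hθ₀ : 0 ≤ θ) (hθ₁ : θ ≤ π / 2) (hα : 0 < α)
    (Rd : Matrix (Fin 3) (Fin 3) ℝ) (hRd : SO3 Rd)
    (kR kΩ : ℝ) (hkR : 0 < kR) (hkΩ : 0 < kΩ)
    (R : ℝ → Matrix (Fin 3) (Fin 3) ℝ) (Ω : ℝ → Fin 3 → ℝ) (u : ℝ → Fin 3 → ℝ)
    (hSO : ∀ s, SO3 (R s))
    (hu : ∀ s, u s =
      -(kR • eRvec (Matrix.diagonal ![g₁, g₂, g₃]) Rd r v θ α (R s)) - kΩ • Ω s +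
        crossProduct (Ω s) (J *ᵥ Ω s))
    (hRdyn : ∀ t, HasDerivAt R (R t * hat (Ω t)) t)
    (hΩdyn : ∀ t, HasDerivAt Ω
      (J⁻¹ *ᵥ (u t - crossProduct (Ω t) (J *ᵥ Ω t))) t)
    (hPsidyn : ∀ t, HasDerivAt
      (fun s => Psi (Matrix.diagonal ![g₁, g₂, g₃]) Rd r v θ α (R s))
      (eRvec (Matrix.diagonal ![g₁, g₂, g₃]) Rd r v θ α (R t) ⬝ᵥ Ω t) t) :
    (∀ t, HasDerivAt
        (fun s => (1 / 2) * (Ω s ⬝ᵥ (J *ᵥ Ω s)) +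
          kR * Psi (Matrix.diagonal ![g₁, g₂, g₃]) Rd r v θ α (R s))
        (-(kΩ * (Ω t ⬝ᵥ Ω t))) t) ∧
      Antitone (fun s => (1 / 2) * (Ω s ⬝ᵥ (J *ᵥ Ω s)) +
        kR * Psi (Matrix.diagonal ![g₁, g₂, g₃]) Rd r v θ α (R s)) := by
  classical
  have hJsymm : Jᵀ = J := hJ.1
  have hJJ : J * J⁻¹ = 1 :=
    Matrix.mul_nonsing_inv J (isUnit_iff_ne_zero.mpr (ne_of_gt hJ.det_pos))
  set G := Matrix.diagonal ![g₁, g₂, g₃] with hG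
  set w : ℝ → Fin 3 → ℝ := fun t => -(kR • eRvec G Rd r v θ α (R t)) - kΩ • Ω t with hw
  have hΩ' : ∀ t, HasDerivAt Ω (J⁻¹ *ᵥ w t) t := by
    intro t
    have h := hΩdyn t
    have : u t - crossProduct (Ω t) (J *ᵥ Ω t) = w t := by rw [hu t]; simp only [hw]; abel
    rwa [this] at h
  have hcomp : ∀ i t, HasDerivAt (fun s => Ω s i) ((J⁻¹ *ᵥ w t) i) t := by
    intro i t
    exact (ContinuousLinearMap.proj (R := ℝ) (φ := fun _ : Fin 3 => ℝ)
      i).hasFDerivAt.comp_hasDerivAt t (hΩ' t)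
  have hJcomp : ∀ i t, HasDerivAt (fun s => (J *ᵥ Ω s) i) ((J *ᵥ (J⁻¹ *ᵥ w t)) i) t := by
    intro i t
    have h : HasDerivAt (fun s => ∑ j, J i j * Ω s j) (∑ j, J i j * (J⁻¹ *ᵥ w t) j) t :=
      HasDerivAt.fun_sum fun j _ => (hcomp j t).const_mul (J i j)
    simpa [Matrix.mulVec, dotProduct] using h
  have hdot : ∀ t, HasDerivAt (fun s => Ω s ⬝ᵥ (J *ᵥ Ω s))
      ((J⁻¹ *ᵥ w t) ⬝ᵥ (J *ᵥ Ω t) + Ω t ⬝ᵥ (J *ᵥ (J⁻¹ *ᵥ w t))) t := by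
    intro t
    have h : HasDerivAt (fun s => ∑ i, Ω s i * (J *ᵥ Ω s) i)
        (∑ i, ((J⁻¹ *ᵥ w t) i * (J *ᵥ Ω t) i + Ω t i * (J *ᵥ (J⁻¹ *ᵥ w t)) i)) t :=
      HasDerivAt.fun_sum fun i _ => (hcomp i t).mul (hJcomp i t)
    simpa [dotProduct, Finset.sum_add_distrib] using h
  have hJw : ∀ t, J *ᵥ (J⁻¹ *ᵥ w t) = w t := by
    intro t
    rw [Matrix.mulVec_mulVec, hJJ, Matrix.one_mulVec]
  have hval : ∀ t,
      (1 / 2 : ℝ) * ((J⁻¹ *ᵥ w t) ⬝ᵥ (J *ᵥ Ω t) + Ω t ⬝ᵥ (J *ᵥ (J⁻¹ *ᵥ w t))) +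
        kR * (eRvec G Rd r v θ α (R t) ⬝ᵥ Ω t) = -(kΩ * (Ω t ⬝ᵥ Ω t)) := by
    intro t
    have h1 : (J⁻¹ *ᵥ w t) ⬝ᵥ (J *ᵥ Ω t) = w t ⬝ᵥ Ω t := by
      rw [Matrix.dotProduct_mulVec, ← Matrix.mulVec_transpose, hJsymm, hJw t]
    have h2 : Ω t ⬝ᵥ (J *ᵥ (J⁻¹ *ᵥ w t)) = w t ⬝ᵥ Ω t := by
      rw [hJw t, dotProduct_comm]
    rw [h1, h2, hw]
    simp only [sub_dotProduct, neg_dotProduct, smul_dotProduct,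
      smul_eq_mul]
    ring
  have hmain : ∀ t, HasDerivAt
      (fun s => (1 / 2) * (Ω s ⬝ᵥ (J *ᵥ Ω s)) + kR * Psi G Rd r v θ α (R s))
      (-(kΩ * (Ω t ⬝ᵥ Ω t))) t := by
    intro t
    have h := ((hdot t).const_mul (1 / 2 : ℝ)).add ((hPsidyn t).const_mul kR)
    rwa [hval t] at h
  refine ⟨hmain, ?_⟩
  apply antitone_of_deriv_nonpos
  · exact fun t => (hmain t).differentiableAt
  · intro t
    rw [(hmain t).deriv]
    have : (0 : ℝ) ≤ Ω t ⬝ᵥ Ω t :=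
      Finset.sum_nonneg fun i _ => mul_self_nonneg _
    nlinarith [hkΩ.le]
end
end

section
/- Let G = diag(g1,g2,g3) with distinct positive entries, R_d ∈ SO(3), and let B(R) > 1 be the barrier value at R = R_d. The Hessian of Ψ(R) = A(R,R_d) B(R) at R = R_d, evaluated on variations δR = R_d η̂, equals η · (1/2) B(R_d) (tr(G) I − G) η, which is a positive definite quadratic form in η ∈ R^3. -/
open Matrix Real

noncomputable section

section Aux
attribute [local instance] Matrix.linftyOpNormedAddCommGroup Matrix.linftyOpNormedSpace
  Matrix.linftyOpNormedRing Matrix.linftyOpNormedAlgebra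

abbrev M3 := Matrix (Fin 3) (Fin 3) ℝ

/-- The continuous linear functional `A ↦ (C * A).trace`. -/
def TL (C : M3) : M3 →L[ℝ] ℝ :=
  LinearMap.toContinuousLinearMap
    ((Matrix.traceLinearMap (Fin 3) ℝ ℝ).comp (LinearMap.mulLeft ℝ C))

lemma hasDerivAt_TL (C : M3) {f : ℝ → M3} {f' : M3} {t : ℝ} (hf : HasDerivAt f f' t) :
    HasDerivAt (fun s => (C * f s).trace) (C * f').trace t := by
  exact ((TL C).hasFDerivAt.comp_hasDerivAt t hf)

lemma trace_repr (r v : Fin 3 → ℝ) (Rd A : Matrix (Fin 3) (Fin 3) ℝ) :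
    r ⬝ᵥ ((Rd * A)ᵀ *ᵥ v) = (vecMulVec r (Rdᵀ *ᵥ v) * A).trace := by
  simp [Matrix.trace, Matrix.mul_apply, vecMulVec, mulVec, dotProduct, Matrix.transpose_apply,
    Fin.sum_univ_three, Matrix.diag]
  ring

lemma key (g₁ g₂ g₃ : ℝ)
    (r v : Fin 3 → ℝ)
    (θ α : ℝ) (hden : 0 < 1 + Real.cos θ)
    (Rd : Matrix (Fin 3) (Fin 3) ℝ) (hRd : Rdᵀ * Rd = 1)
    (hfeasd : r ⬝ᵥ (Rdᵀ *ᵥ v) < Real.cos θ) (η : Fin 3 → ℝ) :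
    iteratedDeriv 2
        (fun ε : ℝ =>
          Psi (Matrix.diagonal ![g₁, g₂, g₃]) Rd r v θ α
            (Rd * NormedSpace.exp (ε • hat η))) 0
      = η ⬝ᵥ ((((1 / 2) * errB r v θ α Rd) •
          ((Matrix.diagonal ![g₁, g₂, g₃]).trace • (1 : Matrix (Fin 3) (Fin 3) ℝ) -
            Matrix.diagonal ![g₁, g₂, g₃])) *ᵥ η) := by
  set G : M3 := Matrix.diagonal ![g₁, g₂, g₃] with hG
  set X : M3 := hat η with hX
  set E : ℝ → M3 := fun ε => NormedSpace.exp (ε • X) with hEdef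
  have hE : ∀ ε : ℝ, HasDerivAt E (E ε * X) ε := fun ε => hasDerivAt_exp_smul_const X ε
  have hE0 : E 0 = 1 := by simp [hEdef, NormedSpace.exp_zero]
  set C : M3 := vecMulVec r (Rdᵀ *ᵥ v) with hC
  set φ : ℝ → ℝ := fun ε => (C * E ε).trace with hφdef
  set q : ℝ → ℝ := fun ε => (Real.cos θ - φ ε) / (1 + Real.cos θ) with hqdef
  set g : ℝ → ℝ := fun ε => (1/2) * G.trace - (1/2) * (G * E ε).trace with hgdef
  set g1 : ℝ → ℝ := fun ε => -((1/2) * (G * (E ε * X)).trace) with hg1def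
  set h : ℝ → ℝ := fun ε => 1 - (1/α) * Real.log (q ε) with hhdef
  set h1 : ℝ → ℝ := fun ε =>
    -((1/α) * ((q ε)⁻¹ * (-(C * (E ε * X)).trace / (1 + Real.cos θ)))) with hh1def
  -- the function equals g * h
  have hfeq : (fun ε : ℝ => Psi G Rd r v θ α (Rd * E ε)) = fun ε => g ε * h ε := by
    funext ε
    have h1' : Rdᵀ * (Rd * E ε) = E ε := by rw [← Matrix.mul_assoc, hRd, Matrix.one_mul]
    have h2' : r ⬝ᵥ ((Rd * E ε)ᵀ *ᵥ v) = φ ε := trace_repr r v Rd (E ε)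
    simp only [Psi, errA, errB, h1', h2', hgdef, hhdef, hqdef, mul_sub, Matrix.mul_one,
      Matrix.trace_sub]
  -- derivatives
  have hg : ∀ ε : ℝ, HasDerivAt g (g1 ε) ε := by
    intro ε
    have := ((hasDerivAt_TL G (hE ε)).const_mul (1/2)).const_sub ((1/2) * G.trace)
    simpa [hgdef, hg1def] using this
  have hg1 : ∀ ε : ℝ, HasDerivAt g1 (-((1/2) * (G * (E ε * X * X)).trace)) ε := by
    intro ε
    exact (((hasDerivAt_TL G ((hE ε).mul_const X)).const_mul (1/2))).neg
  have hφ : ∀ ε : ℝ, HasDerivAt φ ((C * (E ε * X)).trace) ε := fun ε => hasDerivAt_TL C (hE ε)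
  have hq : ∀ ε : ℝ, HasDerivAt q (-(C * (E ε * X)).trace / (1 + Real.cos θ)) ε := by
    intro ε
    have := ((hφ ε).const_sub (Real.cos θ)).div_const (1 + Real.cos θ)
    simpa [hqdef] using this
  -- the open set where feasibility holds
  have hφcont : Continuous φ := by
    rw [continuous_iff_continuousAt]; exact fun ε => (hφ ε).continuousAt
  have hUopen : IsOpen {ε : ℝ | φ ε < Real.cos θ} := isOpen_lt hφcont continuous_const
  have hφ0 : φ 0 = r ⬝ᵥ (Rdᵀ *ᵥ v) := by
    have := (trace_repr r v Rd (E 0)).symm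
    rw [hE0, Matrix.mul_one] at this
    simp only [hφdef, hE0, Matrix.mul_one] at this ⊢
    exact this
  have hU0 : (0 : ℝ) ∈ {ε : ℝ | φ ε < Real.cos θ} := by simpa [hφ0] using hfeasd
  have hqpos : ∀ ε ∈ {ε : ℝ | φ ε < Real.cos θ}, 0 < q ε := fun ε hε =>
    div_pos (sub_pos.mpr hε) hden
  have hh : ∀ ε ∈ {ε : ℝ | φ ε < Real.cos θ}, HasDerivAt h (h1 ε) ε := by
    intro ε hε
    have hlog : HasDerivAt (fun ε => Real.log (q ε))
        ((q ε)⁻¹ * (-(C * (E ε * X)).trace / (1 + Real.cos θ))) ε :=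
      (Real.hasDerivAt_log (ne_of_gt (hqpos ε hε))).comp ε (hq ε)
    simpa [hhdef, hh1def] using (hlog.const_mul (1/α)).const_sub 1
  have hf : ∀ ε ∈ {ε : ℝ | φ ε < Real.cos θ},
      HasDerivAt (fun ε : ℝ => Psi G Rd r v θ α (Rd * E ε)) (g1 ε * h ε + g ε * h1 ε) ε := by
    intro ε hε
    rw [hfeq]
    exact (hg ε).mul (hh ε hε)
  have hderiv : ∀ᶠ ε in nhds 0,
      deriv (fun ε : ℝ => Psi G Rd r v θ α (Rd * E ε)) ε = g1 ε * h ε + g ε * h1 ε := by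
    filter_upwards [hUopen.mem_nhds hU0] with ε hε
    exact (hf ε hε).deriv
  -- second derivative at 0
  have hqinv : HasDerivAt (fun ε => (q ε)⁻¹)
      (-(-(C * (E 0 * X)).trace / (1 + Real.cos θ)) / q 0 ^ 2) 0 :=
    (hq 0).inv (ne_of_gt (hqpos 0 hU0))
  have hN : HasDerivAt (fun ε => -(C * (E ε * X)).trace / (1 + Real.cos θ))
      (-(C * (E 0 * X * X)).trace / (1 + Real.cos θ)) 0 :=
    ((hasDerivAt_TL C ((hE 0).mul_const X)).neg).div_const _
  have hh1diff : HasDerivAt h1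
      (-((1/α) * ((-(-(C * (E 0 * X)).trace / (1 + Real.cos θ)) / q 0 ^ 2) *
          (-(C * (E 0 * X)).trace / (1 + Real.cos θ)) +
        (q 0)⁻¹ * (-(C * (E 0 * X * X)).trace / (1 + Real.cos θ))))) 0 :=
    ((hqinv.mul hN).const_mul (1/α)).neg
  have hsum : HasDerivAt (fun ε => g1 ε * h ε + g ε * h1 ε)
      ((-((1/2) * (G * (E 0 * X * X)).trace)) * h 0 + g1 0 * h1 0 +
        (g1 0 * h1 0 + g 0 * (-((1/α) * ((-(-(C * (E 0 * X)).trace / (1 + Real.cos θ)) / q 0 ^ 2) *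
          (-(C * (E 0 * X)).trace / (1 + Real.cos θ)) +
        (q 0)⁻¹ * (-(C * (E 0 * X * X)).trace / (1 + Real.cos θ))))))) 0 :=
    ((hg1 0).mul (hh 0 hU0)).add ((hg 0).mul hh1diff)
  have hg10 : g1 0 = 0 := by
    have : (G * X).trace = 0 := by
      simp [hG, hX, hat, Matrix.trace, Matrix.mul_apply, Matrix.diagonal, Fin.sum_univ_three,
        Matrix.diag]
    simp [hg1def, hE0, this]
  have hg0 : g 0 = 0 := by simp [hgdef, hE0]
  have hh0 : h 0 = errB r v θ α Rd := by
    simp [hhdef, hqdef, hφ0, errB]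
  have hfinal : iteratedDeriv 2 (fun ε : ℝ => Psi G Rd r v θ α (Rd * E ε)) 0
      = (-((1/2) * (G * (X * X)).trace)) * errB r v θ α Rd := by
    rw [iteratedDeriv_succ, iteratedDeriv_one]
    rw [Filter.EventuallyEq.deriv_eq hderiv]
    rw [hsum.deriv, hg10, hg0, hh0, hE0, Matrix.one_mul]
    ring
  rw [hfinal, hG, hX]
  simp only [Matrix.trace, Matrix.mul_apply, hat, Matrix.diagonal, Fin.sum_univ_three,
    Matrix.diag, dotProduct, mulVec, Matrix.smul_apply, Matrix.sub_apply, Matrix.one_apply,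
    smul_eq_mul]
  norm_num [Fin.ext_iff, Matrix.cons_val_two, Matrix.tail_cons, Matrix.head_cons]
  ring

lemma quad_expand (g₁ g₂ g₃ B : ℝ) (η : Fin 3 → ℝ) :
    η ⬝ᵥ ((((1 / 2) * B) •
          ((Matrix.diagonal ![g₁, g₂, g₃]).trace • (1 : Matrix (Fin 3) (Fin 3) ℝ) -
            Matrix.diagonal ![g₁, g₂, g₃])) *ᵥ η)
      = (1/2) * B * (η 0 ^ 2 * (g₂ + g₃) + η 1 ^ 2 * (g₁ + g₃) + η 2 ^ 2 * (g₁ + g₂)) := by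
  simp only [Matrix.trace, Matrix.mul_apply, Matrix.diagonal, Fin.sum_univ_three, Matrix.diag,
    dotProduct, mulVec, Matrix.smul_apply, Matrix.sub_apply, Matrix.one_apply, smul_eq_mul]
  norm_num [Fin.ext_iff, Matrix.cons_val_two, Matrix.tail_cons, Matrix.head_cons]
  ring

end Aux

/-- The Hessian of `Ψ` at `R = R_d` on variations `δR = R_d η̂` equals
`η · ½ B(R_d)(tr(G)I − G) η`, a positive definite quadratic form. -/
theorem stmt_19 (g₁ g₂ g₃ : ℝ) (hg₁ : 0 < g₁) (hg₂ : 0 < g₂) (hg₃ : 0 < g₃)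
    (hd₁ : g₁ ≠ g₂) (hd₂ : g₂ ≠ g₃) (hd₃ : g₃ ≠ g₁)
    (r v : Fin 3 → ℝ) (hr : r ⬝ᵥ r = 1) (hv : v ⬝ᵥ v = 1)
    (θ α : ℝ) (hθ₀ : 0 ≤ θ) (hθ₁ : θ ≤ π / 2) (hα : 0 < α)
    (Rd : Matrix (Fin 3) (Fin 3) ℝ) (hRd : SO3 Rd)
    (hfeasd : r ⬝ᵥ (Rdᵀ *ᵥ v) < Real.cos θ) :
    (∀ η : Fin 3 → ℝ,
      iteratedDeriv 2
        (fun ε : ℝ =>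
          Psi (Matrix.diagonal ![g₁, g₂, g₃]) Rd r v θ α
            (Rd * NormedSpace.exp (ε • hat η))) 0
      = η ⬝ᵥ ((((1 / 2) * errB r v θ α Rd) •
          ((Matrix.diagonal ![g₁, g₂, g₃]).trace • (1 : Matrix (Fin 3) (Fin 3) ℝ) -
            Matrix.diagonal ![g₁, g₂, g₃])) *ᵥ η)) ∧
    ∀ η : Fin 3 → ℝ, η ≠ 0 →
      0 < η ⬝ᵥ ((((1 / 2) * errB r v θ α Rd) •
          ((Matrix.diagonal ![g₁, g₂, g₃]).trace • (1 : Matrix (Fin 3) (Fin 3) ℝ) -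
            Matrix.diagonal ![g₁, g₂, g₃])) *ᵥ η) := by
  have hcos : 0 ≤ Real.cos θ := by
    apply Real.cos_nonneg_of_mem_Icc
    constructor <;> [linarith [Real.pi_pos]; exact hθ₁]
  have hden : (0:ℝ) < 1 + Real.cos θ := by linarith
  constructor
  · intro η
    exact key g₁ g₂ g₃ r v θ α hden Rd hRd.1 hfeasd η
  · intro η hη
    -- positivity of B = errB r v θ α Rd
    have hw : (Rdᵀ *ᵥ v) ⬝ᵥ (Rdᵀ *ᵥ v) = 1 := by
      rw [Matrix.dotProduct_mulVec, Matrix.vecMul_transpose, Matrix.mulVec_mulVec,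
        mul_eq_one_comm.mp hRd.1, Matrix.one_mulVec, hv]
    have hs : (-1:ℝ) ≤ r ⬝ᵥ (Rdᵀ *ᵥ v) := by
      have h0 : (0:ℝ) ≤ (r + Rdᵀ *ᵥ v) ⬝ᵥ (r + Rdᵀ *ᵥ v) := Finset.sum_nonneg fun i _ =>
        mul_self_nonneg _
      rw [add_dotProduct, dotProduct_add, dotProduct_add, hr, hw,
        dotProduct_comm (Rdᵀ *ᵥ v) r] at h0
      linarith
    have hq0 : (0:ℝ) < (Real.cos θ - r ⬝ᵥ (Rdᵀ *ᵥ v)) / (1 + Real.cos θ) :=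
      div_pos (by linarith) hden
    have hq1 : (Real.cos θ - r ⬝ᵥ (Rdᵀ *ᵥ v)) / (1 + Real.cos θ) ≤ 1 :=
      (div_le_one hden).mpr (by linarith)
    have hlog : Real.log ((Real.cos θ - r ⬝ᵥ (Rdᵀ *ᵥ v)) / (1 + Real.cos θ)) ≤ 0 :=
      Real.log_nonpos (le_of_lt hq0) hq1
    have hB : 0 < errB r v θ α Rd := by
      unfold errB
      have : (1/α) * Real.log ((Real.cos θ - r ⬝ᵥ (Rdᵀ *ᵥ v)) / (1 + Real.cos θ)) ≤ 0 :=
        mul_nonpos_of_nonneg_of_nonpos (by positivity) hlog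
      linarith
    rw [quad_expand]
    have h0 : 0 ≤ η 0 ^ 2 * (g₂ + g₃) := mul_nonneg (sq_nonneg _) (by linarith)
    have h1 : 0 ≤ η 1 ^ 2 * (g₁ + g₃) := mul_nonneg (sq_nonneg _) (by linarith)
    have h2 : 0 ≤ η 2 ^ 2 * (g₁ + g₂) := mul_nonneg (sq_nonneg _) (by linarith)
    have hex : η 0 ≠ 0 ∨ η 1 ≠ 0 ∨ η 2 ≠ 0 := by
      by_contra hc
      push_neg at hc
      apply hη
      funext i
      fin_cases i <;> simp [hc.1, hc.2.1, hc.2.2]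
    have hpos : 0 < η 0 ^ 2 * (g₂ + g₃) + η 1 ^ 2 * (g₁ + g₃) + η 2 ^ 2 * (g₁ + g₂) := by
      rcases hex with h | h | h
      · have : 0 < η 0 ^ 2 := lt_of_le_of_ne (sq_nonneg _) (Ne.symm (pow_ne_zero 2 h))
        nlinarith
      · have : 0 < η 1 ^ 2 := lt_of_le_of_ne (sq_nonneg _) (Ne.symm (pow_ne_zero 2 h))
        nlinarith
      · have : 0 < η 2 ^ 2 := lt_of_le_of_ne (sq_nonneg _) (Ne.symm (pow_ne_zero 2 h))
        nlinarith
    have : 0 < (1/2) * errB r v θ α Rd := by positivity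
    exact mul_pos this hpos
end
end
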